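/- arXiv:2206.09865 — 2 statements merged into one kernel-verified Lean document; each statement's English description precedes it below -/
import Mathlib

section
/- Let f be c₁-strongly convex relative to ‖·‖_A with c₁ > 0 and also differentiable with L-Lipschitz gradient, let g be convex, and let A have full row rank. Set d = L/λ_min(AAᵀ) and V^k = ‖λ^k − λ*‖² + t²‖B(z^k − z*)‖². If 0 < t < √(c₁L/λ_min(AAᵀ)), then the ADMM iterates satisfy V^{k+1} ≤ (1 − 2c₁t/(c₁d + 2c₁t + t²))·V^k for all k ≥ 0. -/
/-!
The `x`-update is the first-order condition `f' x⁺ = -Aᵀ w` with `w = λ + t (A x⁺ + B z - b)`,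
and the `z`-update makes `-Bᵀ λ⁺` a subgradient of `g` at `z⁺`. Against the optimality conditions
at `(x*, z*, λ*)`, with `a = A (x⁺ - x*)`, this yields three inequalities: relative strong
convexity gives `c₁ ‖a‖² ≤ -⟪w - λ*, a⟫`; co-coercivity `‖f' x - f' y‖² ≤ L ⟪f' x - f' y, x - y⟫`
of the `L`-Lipschitz gradient, together with `‖Aᵀ v‖² ≥ λ_min ‖v‖²`, gives
`λ_min ‖w - λ*‖² ≤ -L ⟪w - λ*, a⟫`; monotonicity of `∂g` gives `⟪λ⁺ - λ*, B (z⁺ - z*)⟫ ≤ 0`.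
The contraction of `V` is a nonnegative combination of these three and of one square.

Co-coercivity comes from the descent lemma `f (y + d) ≤ f y + ⟪f' y, d⟫ + L/2 ‖d‖²`, which needs no
differentiability: by the subgradient inequality, the increments of
`s ↦ f (y + s d) - s ⟪f' y, d⟫ - L/2 s² ‖d‖²` are `O((s' - s)²)`, so it is nonincreasing.
Comparing the descent lemma with the strong-convexity lower bound also gives `c₁ λ_min ≤ L`,
which the final estimate needs.
-/

open Matrix Set Filter Topology WithLp
open scoped RealInnerProductSpace

theorem le_of_forall_le_add_mul {a b c : ℝ} (h : ∀ θ : ℝ, 0 < θ → θ ≤ 1 → a ≤ c + θ * b) :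
    a ≤ c := by
  have hlim : Tendsto (fun θ : ℝ => c + θ * b) (𝓝[>] 0) (𝓝 c) := by
    have : Continuous fun θ : ℝ => c + θ * b := by fun_prop
    simpa using (this.tendsto 0).mono_left nhdsWithin_le_nhds
  refine ge_of_tendsto hlim ?_
  filter_upwards [Ioc_mem_nhdsGT one_pos] with θ hθ using h θ hθ.1 hθ.2

theorem le_of_forall_sub_le_mul_sq {h : ℝ → ℝ} {a b C : ℝ} (hab : a ≤ b)
    (hh : ∀ s s', a ≤ s → s ≤ s' → s' ≤ b → h s' - h s ≤ C * (s' - s) ^ 2) : h b ≤ h a := by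
  have hM : ∀ M : ℕ, 1 ≤ M → h b - h a ≤ C * (b - a) ^ 2 / M := by
    intro M hM
    have hM' : (0 : ℝ) < M := by exact_mod_cast hM
    set δ := (b - a) / M
    have hδ : 0 ≤ δ := div_nonneg (sub_nonneg.2 hab) hM'.le
    have hMδ : M * δ = b - a := mul_div_cancel₀ _ hM'.ne'
    calc h b - h a = ∑ i ∈ Finset.range M, (h (a + (i + 1 : ℕ) * δ) - h (a + i * δ)) := by
          rw [Finset.sum_range_sub (fun i : ℕ => h (a + i * δ))]
          simp [hMδ]
      _ ≤ ∑ i ∈ Finset.range M, C * δ ^ 2 := by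
          refine Finset.sum_le_sum fun i hi => ?_
          have hi' : (i : ℝ) + 1 ≤ M := by exact_mod_cast Finset.mem_range.1 hi
          have := hh (a + i * δ) (a + (i + 1) * δ) (by nlinarith) (by nlinarith) (by nlinarith)
          simpa [add_mul] using this
      _ = C * (b - a) ^ 2 / M := by
          rw [Finset.sum_const, Finset.card_range, nsmul_eq_mul, ← hMδ]; field_simp
  have := ge_of_tendsto (tendsto_const_div_atTop_nhds_zero_nat (C * (b - a) ^ 2))
    (eventually_atTop.2 ⟨1, hM⟩)
  linarith

theorem ConvexOn.add_le_of_forall_le_apply_add_smul {E : Type*} [AddCommGroup E] [Module ℝ E]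
    {h : E → ℝ} (hh : ConvexOn ℝ univ h) {x d : E} {ℓ C : ℝ}
    (hlow : ∀ θ : ℝ, 0 < θ → θ ≤ 1 → h x + θ * ℓ - θ ^ 2 * C ≤ h (x + θ • d)) :
    h x + ℓ ≤ h (x + d) := by
  refine le_of_forall_le_add_mul (b := C) fun θ hθ hθ1 => ?_
  have hchord : h (x + θ • d) ≤ (1 - θ) * h x + θ * h (x + d) := by
    have hx : x + θ • d = (1 - θ) • x + θ • (x + d) := by module
    rw [hx]
    exact hh.2 (mem_univ x) (mem_univ (x + d)) (sub_nonneg.2 hθ1) hθ.le (by ring)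
  nlinarith [hlow θ hθ hθ1]

section Smooth

variable {E : Type*} [NormedAddCommGroup E] [InnerProductSpace ℝ E] {f : E → ℝ} {f' : E → E}
  {L : ℝ}

theorem apply_add_le_of_lipschitz (hsub : ∀ x y, f x + ⟪f' x, y - x⟫ ≤ f y)
    (hlip : ∀ x y, ‖f' x - f' y‖ ≤ L * ‖x - y‖) (y d : E) :
    f (y + d) ≤ f y + ⟪f' y, d⟫ + L / 2 * ‖d‖ ^ 2 := by
  let φ : ℝ → ℝ := fun s => f (y + s • d) - s * ⟪f' y, d⟫ - L / 2 * ‖d‖ ^ 2 * s ^ 2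
  suffices φ 1 ≤ φ 0 by simp [φ] at this; linarith
  refine le_of_forall_sub_le_mul_sq (C := L / 2 * ‖d‖ ^ 2) zero_le_one fun s s' hs hss' _ => ?_
  have h1 := hsub (y + s' • d) (y + s • d)
  have hgrad : ⟪f' (y + s' • d) - f' y, d⟫ ≤ L * s' * ‖d‖ ^ 2 := by
    calc _ ≤ ‖f' (y + s' • d) - f' y‖ * ‖d‖ := real_inner_le_norm _ _
      _ ≤ L * ‖y + s' • d - y‖ * ‖d‖ := by gcongr; exact hlip _ _
      _ = L * s' * ‖d‖ ^ 2 := by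
        rw [add_sub_cancel_left, norm_smul, Real.norm_of_nonneg (hs.trans hss')]; ring
  have hstep : y + s • d - (y + s' • d) = (s - s') • d := by module
  rw [hstep, inner_smul_right] at h1
  rw [inner_sub_left] at hgrad
  simp only [φ]
  nlinarith [mul_le_mul_of_nonneg_left hgrad (sub_nonneg.2 hss')]

theorem norm_sub_sq_le_mul_inner_of_lipschitz (hL : 0 < L) (hsub : ∀ x y, f x + ⟪f' x, y - x⟫ ≤ f y)
    (hlip : ∀ x y, ‖f' x - f' y‖ ≤ L * ‖x - y‖) (x y : E) :
    ‖f' x - f' y‖ ^ 2 ≤ L * ⟪f' x - f' y, x - y⟫ := by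
  have half : ∀ u v, f u + ⟪f' u, v - u⟫ + ‖f' v - f' u‖ ^ 2 / (2 * L) ≤ f v := by
    intro u v
    set Δ := f' v - f' u
    have hlow := hsub u (v - L⁻¹ • Δ)
    have hup := apply_add_le_of_lipschitz hsub hlip v (-(L⁻¹ • Δ))
    rw [sub_right_comm, inner_sub_right, inner_smul_right] at hlow
    rw [← sub_eq_add_neg, inner_neg_right, inner_smul_right, norm_neg, norm_smul,
      Real.norm_of_nonneg (inv_nonneg.2 hL.le)] at hup
    have hΔ : L⁻¹ * ⟪f' v, Δ⟫ - L⁻¹ * ⟪f' u, Δ⟫ = L⁻¹ * ‖Δ‖ ^ 2 := by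
      rw [← mul_sub, ← inner_sub_left, real_inner_self_eq_norm_sq]
    have hsq : L / 2 * (L⁻¹ * ‖Δ‖) ^ 2 = ‖Δ‖ ^ 2 / (2 * L) := by field_simp
    have hhalf : L⁻¹ * ‖Δ‖ ^ 2 - ‖Δ‖ ^ 2 / (2 * L) = ‖Δ‖ ^ 2 / (2 * L) := by field_simp; ring
    linarith
  have h1 := half x y
  have h2 := half y x
  rw [norm_sub_rev] at h1
  have hinner : ⟪f' x - f' y, x - y⟫ = -(⟪f' x, y - x⟫ + ⟪f' y, x - y⟫) := by
    rw [inner_sub_left, ← neg_sub y x, inner_neg_right]; ring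
  have hsum : ‖f' x - f' y‖ ^ 2 / L ≤ ⟪f' x - f' y, x - y⟫ := by
    rw [hinner]; field_simp at h1 h2 ⊢; linarith
  calc ‖f' x - f' y‖ ^ 2 = L * (‖f' x - f' y‖ ^ 2 / L) := by field_simp
    _ ≤ L * ⟪f' x - f' y, x - y⟫ := by gcongr

end Smooth

section Euclidean

variable {ι : Type*} [Fintype ι]

theorem dotProduct_eq_inner (u v : ι → ℝ) : u ⬝ᵥ v = ⟪toLp 2 u, toLp 2 v⟫ := by
  rw [EuclideanSpace.inner_toLp_toLp, star_trivial, dotProduct_comm]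

theorem dotProduct_self_eq_norm_sq (v : ι → ℝ) : v ⬝ᵥ v = ‖toLp 2 v‖ ^ 2 := by
  rw [dotProduct_eq_inner, real_inner_self_eq_norm_sq]

variable {f : (ι → ℝ) → ℝ} {f' : (ι → ℝ) → ι → ℝ} {L : ℝ}

theorem EuclideanSpace.add_inner_le_of_dotProduct (hsub : ∀ x y, f x + f' x ⬝ᵥ (y - x) ≤ f y)
    (p q : EuclideanSpace ℝ ι) :
    f (ofLp p) + ⟪toLp 2 (f' (ofLp p)), q - p⟫ ≤ f (ofLp q) := by
  simpa only [dotProduct_eq_inner, toLp_sub, toLp_ofLp] using hsub (ofLp p) (ofLp q)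

theorem EuclideanSpace.lipschitz_of_dotProduct
    (hlip : ∀ x y, √((f' x - f' y) ⬝ᵥ (f' x - f' y)) ≤ L * √((x - y) ⬝ᵥ (x - y)))
    (p q : EuclideanSpace ℝ ι) :
    ‖toLp 2 (f' (ofLp p)) - toLp 2 (f' (ofLp q))‖ ≤ L * ‖p - q‖ := by
  simpa only [dotProduct_self_eq_norm_sq, Real.sqrt_sq (norm_nonneg _), toLp_sub, toLp_ofLp]
    using hlip (ofLp p) (ofLp q)

theorem apply_add_le_of_dotProduct_lipschitz (hsub : ∀ x y, f x + f' x ⬝ᵥ (y - x) ≤ f y)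
    (hlip : ∀ x y, √((f' x - f' y) ⬝ᵥ (f' x - f' y)) ≤ L * √((x - y) ⬝ᵥ (x - y))) (y d : ι → ℝ) :
    f (y + d) ≤ f y + f' y ⬝ᵥ d + L / 2 * (d ⬝ᵥ d) := by
  simpa only [dotProduct_self_eq_norm_sq, dotProduct_eq_inner, ofLp_add, ofLp_toLp] using
    apply_add_le_of_lipschitz (EuclideanSpace.add_inner_le_of_dotProduct hsub)
      (EuclideanSpace.lipschitz_of_dotProduct hlip) (toLp 2 y) (toLp 2 d)

theorem dotProduct_self_sub_le_of_dotProduct_lipschitz (hL : 0 < L)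
    (hsub : ∀ x y, f x + f' x ⬝ᵥ (y - x) ≤ f y)
    (hlip : ∀ x y, √((f' x - f' y) ⬝ᵥ (f' x - f' y)) ≤ L * √((x - y) ⬝ᵥ (x - y))) (x y : ι → ℝ) :
    (f' x - f' y) ⬝ᵥ (f' x - f' y) ≤ L * ((f' x - f' y) ⬝ᵥ (x - y)) := by
  simpa only [dotProduct_self_eq_norm_sq, dotProduct_eq_inner, ofLp_toLp, toLp_sub] using
    norm_sub_sq_le_mul_inner_of_lipschitz hL (EuclideanSpace.add_inner_le_of_dotProduct hsub)
      (EuclideanSpace.lipschitz_of_dotProduct hlip) (toLp 2 x) (toLp 2 y)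

end Euclidean

section Matrix

variable {m n : Type*} [Fintype m] [Fintype n]

theorem dotProduct_add_smul_self (u v : m → ℝ) (θ : ℝ) :
    (u + θ • v) ⬝ᵥ (u + θ • v) = u ⬝ᵥ u + 2 * θ * (u ⬝ᵥ v) + θ ^ 2 * (v ⬝ᵥ v) := by
  simp only [dotProduct_add, add_dotProduct, dotProduct_smul, smul_dotProduct, smul_eq_mul,
    dotProduct_comm v u]
  ring

theorem ConvexOn.sub_dotProduct_le_of_isMin {F : (n → ℝ) → ℝ} (hF : ConvexOn ℝ univ F)
    (M : Matrix m n ℝ) (ν r : m → ℝ) (τ : ℝ) {x₀ : n → ℝ}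
    (hmin : ∀ x, F x₀ + ν ⬝ᵥ (M *ᵥ x₀) + τ / 2 * ((M *ᵥ x₀ + r) ⬝ᵥ (M *ᵥ x₀ + r))
      ≤ F x + ν ⬝ᵥ (M *ᵥ x) + τ / 2 * ((M *ᵥ x + r) ⬝ᵥ (M *ᵥ x + r))) (y : n → ℝ) :
    F x₀ - (ν + τ • (M *ᵥ x₀ + r)) ⬝ᵥ (M *ᵥ (y - x₀)) ≤ F y := by
  set d := y - x₀
  have key := hF.add_le_of_forall_le_apply_add_smul (x := x₀) (d := d)
    (ℓ := -((ν + τ • (M *ᵥ x₀ + r)) ⬝ᵥ (M *ᵥ d))) (C := τ / 2 * ((M *ᵥ d) ⬝ᵥ (M *ᵥ d)))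
    fun θ _ _ => by
      have h := hmin (x₀ + θ • d)
      have e : M *ᵥ (x₀ + θ • d) + r = (M *ᵥ x₀ + r) + θ • (M *ᵥ d) := by
        rw [mulVec_add, mulVec_smul]; abel
      rw [e, dotProduct_add_smul_self, mulVec_add, mulVec_smul] at h
      simp only [dotProduct_add, dotProduct_smul, add_dotProduct, smul_dotProduct,
        smul_eq_mul] at h ⊢
      linarith
  rwa [add_sub_cancel, ← sub_eq_add_neg] at key

theorem eq_neg_mulVec_of_isMin {f : (n → ℝ) → ℝ} {f' : (n → ℝ) → n → ℝ} {L : ℝ}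
    (hdesc : ∀ y d, f (y + d) ≤ f y + f' y ⬝ᵥ d + L / 2 * (d ⬝ᵥ d))
    (M : Matrix m n ℝ) (ν r : m → ℝ) (τ : ℝ) {x₀ : n → ℝ}
    (hmin : ∀ x, f x₀ + ν ⬝ᵥ (M *ᵥ x₀) + τ / 2 * ((M *ᵥ x₀ + r) ⬝ᵥ (M *ᵥ x₀ + r))
      ≤ f x + ν ⬝ᵥ (M *ᵥ x) + τ / 2 * ((M *ᵥ x + r) ⬝ᵥ (M *ᵥ x + r))) :
    f' x₀ = -(Mᵀ *ᵥ (ν + τ • (M *ᵥ x₀ + r))) := by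
  set g := f' x₀ + Mᵀ *ᵥ (ν + τ • (M *ᵥ x₀ + r))
  suffices g ⬝ᵥ g ≤ 0 by
    rw [eq_neg_iff_add_eq_zero, ← dotProduct_self_eq_zero]
    exact le_antisymm this (dotProduct_self_star_nonneg g)
  refine le_of_forall_le_add_mul (c := 0)
    (b := L / 2 * (g ⬝ᵥ g) + τ / 2 * ((M *ᵥ g) ⬝ᵥ (M *ᵥ g))) fun θ hθ _ => ?_
  have h := hmin (x₀ + (-θ) • g)
  have hd := hdesc x₀ ((-θ) • g)
  have e : M *ᵥ (x₀ + (-θ) • g) + r = (M *ᵥ x₀ + r) + (-θ) • (M *ᵥ g) := by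
    rw [mulVec_add, mulVec_smul]; abel
  rw [e, dotProduct_add_smul_self, mulVec_add, mulVec_smul] at h
  have hg : g ⬝ᵥ g = f' x₀ ⬝ᵥ g + (ν + τ • (M *ᵥ x₀ + r)) ⬝ᵥ (M *ᵥ g) := by
    rw [← dotProduct_transpose_mulVec, dotProduct_comm g (Mᵀ *ᵥ _)]
    exact add_dotProduct (f' x₀) _ g
  simp only [dotProduct_add, dotProduct_smul, add_dotProduct, smul_dotProduct,
    smul_eq_mul] at h hd hg ⊢
  nlinarith

section StrongConvexity

variable {f : (n → ℝ) → ℝ} {f' : (n → ℝ) → n → ℝ} {A : Matrix m n ℝ} {c : ℝ}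

theorem le_apply_add_of_convexOn_sub
    (hf : ConvexOn ℝ univ fun y => f y - c / 2 * ((A *ᵥ y) ⬝ᵥ (A *ᵥ y)))
    (hsub : ∀ x y, f x + f' x ⬝ᵥ (y - x) ≤ f y) (x d : n → ℝ) :
    f x + f' x ⬝ᵥ d + c / 2 * ((A *ᵥ d) ⬝ᵥ (A *ᵥ d)) ≤ f (x + d) := by
  have key := hf.add_le_of_forall_le_apply_add_smul (x := x) (d := d)
    (ℓ := f' x ⬝ᵥ d - c * ((A *ᵥ x) ⬝ᵥ (A *ᵥ d))) (C := c / 2 * ((A *ᵥ d) ⬝ᵥ (A *ᵥ d)))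
    fun θ _ _ => by
      have h := hsub x (x + θ • d)
      rw [add_sub_cancel_left, dotProduct_smul, smul_eq_mul] at h
      simp only [mulVec_add, mulVec_smul, dotProduct_add_smul_self]
      linarith
  simp only [mulVec_add, dotProduct_add, add_dotProduct, dotProduct_comm (A *ᵥ d)] at key
  linarith

theorem mul_dotProduct_le_of_convexOn_sub
    (hf : ConvexOn ℝ univ fun y => f y - c / 2 * ((A *ᵥ y) ⬝ᵥ (A *ᵥ y)))
    (hsub : ∀ x y, f x + f' x ⬝ᵥ (y - x) ≤ f y) (x y : n → ℝ) :
    c * ((A *ᵥ (x - y)) ⬝ᵥ (A *ᵥ (x - y))) ≤ (f' x - f' y) ⬝ᵥ (x - y) := by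
  have hxy := le_apply_add_of_convexOn_sub hf hsub x (y - x)
  have hyx := le_apply_add_of_convexOn_sub hf hsub y (x - y)
  rw [add_sub_cancel] at hxy hyx
  have hswap : A *ᵥ (y - x) = -(A *ᵥ (x - y)) := by rw [← mulVec_neg, neg_sub]
  rw [hswap, neg_dotProduct_neg, ← neg_sub x y, dotProduct_neg] at hxy
  rw [sub_dotProduct]
  linarith

end StrongConvexity

theorem mul_le_of_isGreatest {A : Matrix m n ℝ} {c L μ : ℝ} (hc : 0 ≤ c)
    (hμ : IsGreatest {c : ℝ | ∀ v : m → ℝ, c * (v ⬝ᵥ v) ≤ v ⬝ᵥ ((A * Aᵀ) *ᵥ v)} μ)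
    (hμ0 : 0 < μ) (hA : ∀ u, c * ((A *ᵥ u) ⬝ᵥ (A *ᵥ u)) ≤ L * (u ⬝ᵥ u)) : c * μ ≤ L := by
  rcases isEmpty_or_nonempty m with hm | hm
  -- over an empty index type every real is a lower bound, so none is greatest
  · have : μ + 1 ∈ {c : ℝ | ∀ v : m → ℝ, c * (v ⬝ᵥ v) ≤ v ⬝ᵥ ((A * Aᵀ) *ᵥ v)} := fun v => by
      simp [dotProduct, Finset.univ_eq_empty]
    linarith [hμ.2 this]
  set v : m → ℝ := fun _ => 1
  have hv : 0 < v ⬝ᵥ v := by simp [v, dotProduct, Fintype.card_pos]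
  have hcs : (v ⬝ᵥ ((A * Aᵀ) *ᵥ v)) ^ 2
      ≤ (v ⬝ᵥ v) * (((A * Aᵀ) *ᵥ v) ⬝ᵥ ((A * Aᵀ) *ᵥ v)) := by
    simpa only [dotProduct, sq] using
      Finset.sum_mul_sq_le_sq_mul_sq Finset.univ v ((A * Aᵀ) *ᵥ v)
  set s := v ⬝ᵥ ((A * Aᵀ) *ᵥ v)
  have hs : (Aᵀ *ᵥ v) ⬝ᵥ (Aᵀ *ᵥ v) = s := by
    rw [dotProduct_comm, dotProduct_transpose_mulVec, mulVec_mulVec]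
  have hμs : μ * (v ⬝ᵥ v) ≤ s := hμ.1 v
  have hAAt := hA (Aᵀ *ᵥ v)
  rw [hs, mulVec_mulVec] at hAAt
  have hs0 : 0 < s := lt_of_lt_of_le (mul_pos hμ0 hv) hμs
  have : c * s ≤ L * (v ⬝ᵥ v) := by nlinarith
  nlinarith

end Matrix

theorem admm_contraction {E : Type*} [NormedAddCommGroup E] [InnerProductSpace ℝ E]
    {c L μ t : ℝ} (hc : 0 < c) (hμ : 0 < μ) (ht : 0 < t) (hcμ : c * μ ≤ L)
    (htμ : t ^ 2 * μ < c * L) {p₀ p₁ w a q₀ q₁ : E}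
    (hw : w = p₀ + t • (a + q₀)) (hp₁ : p₁ = p₀ + t • (a + q₁))
    (ha : c * ‖a‖ ^ 2 ≤ -⟪w, a⟫) (hwa : μ * ‖w‖ ^ 2 ≤ L * -⟪w, a⟫) (hpq : ⟪p₁, q₁⟫ ≤ 0) :
    (‖p₁‖ ^ 2 + t ^ 2 * ‖q₁‖ ^ 2) * (c * L + 2 * c * t * μ + t ^ 2 * μ)
      ≤ (c * L + t ^ 2 * μ) * (‖p₀‖ ^ 2 + t ^ 2 * ‖q₀‖ ^ 2) := by
  set D := c * L + t ^ 2 * μ - 2 * c * t * μ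
  have hD : 0 < D := by
    rcases le_or_gt c t with h | h
    · nlinarith [mul_le_mul_of_nonneg_right h (mul_pos ht hμ).le]
    · nlinarith [mul_pos hμ (mul_pos (sub_pos.2 h) (sub_pos.2 h)),
        mul_le_mul_of_nonneg_left hcμ hc.le]
  have hL : 0 < L := (mul_pos hc hμ).trans_le hcμ
  have hN : 0 < c * L + 2 * c * t * μ + t ^ 2 * μ := by positivity
  have hN₁ : 0 < c * L + t ^ 2 * μ := by positivity
  have hsq := mul_nonneg (sq_nonneg t) (sq_nonneg ‖D • (a + q₀) + (2 * c * μ) • (w + t • a)‖)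
  obtain rfl : p₀ = w - t • (a + q₀) := eq_sub_of_add_eq hw.symm
  subst hp₁
  -- `D` times the claim is the sum of the three hypotheses with nonnegative weights and of
  -- `t² ‖D (a + q₀) + 2cμ (w + t a)‖² ≥ 0`.
  refine le_of_mul_le_mul_left (a := D) ?_ hD
  simp only [← real_inner_self_eq_norm_sq] at ha hwa hsq ⊢
  simp only [inner_add_left, inner_add_right, inner_sub_left, inner_sub_right, inner_smul_left,
    inner_smul_right, real_inner_comm w a, real_inner_comm w q₀, real_inner_comm w q₁,
    real_inner_comm a q₀, real_inner_comm a q₁, real_inner_comm q₀ q₁, RCLike.conj_to_real] at *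
  linarith [mul_nonneg (mul_nonneg (mul_nonneg ht.le hN.le) hD.le) (neg_nonneg.2 hpq),
    mul_nonneg (mul_nonneg hN₁.le (mul_pos hc ht).le) (sub_nonneg.2 hwa),
    mul_nonneg (mul_nonneg hN₁.le (mul_pos (pow_pos ht 3) hμ).le) (sub_nonneg.2 ha)]

section ADMM

variable {m n o : Type*} [Fintype m] [Fintype n] [Fintype o]
  {A : Matrix m n ℝ} {B : Matrix m o ℝ} {b : m → ℝ} {t : ℝ}

theorem admm_z_update_monotone {g : (o → ℝ) → ℝ} (hg : ConvexOn ℝ univ g) {x₁ : n → ℝ}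
    {z₁ zs : o → ℝ} {ν₀ ν₁ νs : m → ℝ}
    (hz : ∀ z', g z₁ + ν₀ ⬝ᵥ (B *ᵥ z₁)
          + t / 2 * ((A *ᵥ x₁ + B *ᵥ z₁ - b) ⬝ᵥ (A *ᵥ x₁ + B *ᵥ z₁ - b))
        ≤ g z' + ν₀ ⬝ᵥ (B *ᵥ z') + t / 2 * ((A *ᵥ x₁ + B *ᵥ z' - b) ⬝ᵥ (A *ᵥ x₁ + B *ᵥ z' - b)))
    (hν : ν₁ = ν₀ + t • (A *ᵥ x₁ + B *ᵥ z₁ - b))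
    (hgs : ∀ w, g zs + (-(Bᵀ *ᵥ νs)) ⬝ᵥ (w - zs) ≤ g w) :
    (ν₁ - νs) ⬝ᵥ (B *ᵥ (z₁ - zs)) ≤ 0 := by
  have hres : ∀ z', A *ᵥ x₁ + B *ᵥ z' - b = B *ᵥ z' + (A *ᵥ x₁ - b) := fun _ => by abel
  simp only [hres] at hz hν
  have h₁ := hg.sub_dotProduct_le_of_isMin B ν₀ (A *ᵥ x₁ - b) t hz zs
  have h₂ := hgs z₁
  rw [← hν, ← neg_sub z₁ zs, mulVec_neg, dotProduct_neg] at h₁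
  rw [neg_dotProduct, dotProduct_comm, dotProduct_transpose_mulVec] at h₂
  rw [sub_dotProduct]
  linarith

theorem admm_step {f : (n → ℝ) → ℝ} {f' : (n → ℝ) → n → ℝ} {g : (o → ℝ) → ℝ} {c L μ : ℝ}
    (hc : 0 < c) (hμ0 : 0 < μ) (hcμ : c * μ ≤ L) (ht : 0 < t)
    (htμ : t ^ 2 * μ < c * L) (hμ : ∀ v, μ * (v ⬝ᵥ v) ≤ v ⬝ᵥ ((A * Aᵀ) *ᵥ v))
    (hf : ConvexOn ℝ univ fun y => f y - c / 2 * ((A *ᵥ y) ⬝ᵥ (A *ᵥ y)))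
    (hg : ConvexOn ℝ univ g) (hsub : ∀ x y, f x + f' x ⬝ᵥ (y - x) ≤ f y)
    (hlip : ∀ x y, √((f' x - f' y) ⬝ᵥ (f' x - f' y)) ≤ L * √((x - y) ⬝ᵥ (x - y)))
    {x₁ xs : n → ℝ} {z₀ z₁ zs : o → ℝ} {ν₀ ν₁ νs : m → ℝ}
    (hx : ∀ x', f x₁ + ν₀ ⬝ᵥ (A *ᵥ x₁)
          + t / 2 * ((A *ᵥ x₁ + B *ᵥ z₀ - b) ⬝ᵥ (A *ᵥ x₁ + B *ᵥ z₀ - b))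
        ≤ f x' + ν₀ ⬝ᵥ (A *ᵥ x') + t / 2 * ((A *ᵥ x' + B *ᵥ z₀ - b) ⬝ᵥ (A *ᵥ x' + B *ᵥ z₀ - b)))
    (hz : ∀ z', g z₁ + ν₀ ⬝ᵥ (B *ᵥ z₁)
          + t / 2 * ((A *ᵥ x₁ + B *ᵥ z₁ - b) ⬝ᵥ (A *ᵥ x₁ + B *ᵥ z₁ - b))
        ≤ g z' + ν₀ ⬝ᵥ (B *ᵥ z') + t / 2 * ((A *ᵥ x₁ + B *ᵥ z' - b) ⬝ᵥ (A *ᵥ x₁ + B *ᵥ z' - b)))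
    (hν : ν₁ = ν₀ + t • (A *ᵥ x₁ + B *ᵥ z₁ - b))
    (hfeas : A *ᵥ xs + B *ᵥ zs = b) (hfs : f' xs = -(Aᵀ *ᵥ νs))
    (hgs : ∀ w, g zs + (-(Bᵀ *ᵥ νs)) ⬝ᵥ (w - zs) ≤ g w) :
    ((ν₁ - νs) ⬝ᵥ (ν₁ - νs) + t ^ 2 * ((B *ᵥ (z₁ - zs)) ⬝ᵥ (B *ᵥ (z₁ - zs))))
        * (c * L + 2 * c * t * μ + t ^ 2 * μ)
      ≤ (c * L + t ^ 2 * μ)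
        * ((ν₀ - νs) ⬝ᵥ (ν₀ - νs) + t ^ 2 * ((B *ᵥ (z₀ - zs)) ⬝ᵥ (B *ᵥ (z₀ - zs)))) := by
  have hL : 0 < L := (mul_pos hc hμ0).trans_le hcμ
  set a := A *ᵥ (x₁ - xs)
  set w := ν₀ + t • (A *ᵥ x₁ + B *ᵥ z₀ - b) - νs
  have hgrad : f' x₁ - f' xs = -(Aᵀ *ᵥ w) := by
    rw [eq_neg_mulVec_of_isMin (apply_add_le_of_dotProduct_lipschitz hsub hlip) A ν₀ (B *ᵥ z₀ - b) t
      (by simpa only [add_sub_assoc] using hx),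
      hfs, ← add_sub_assoc, mulVec_sub]
    abel
  have hinner : (f' x₁ - f' xs) ⬝ᵥ (x₁ - xs) = -(w ⬝ᵥ a) := by
    rw [hgrad, neg_dotProduct, dotProduct_comm, dotProduct_transpose_mulVec]
  have hstrong : c * (a ⬝ᵥ a) ≤ -(w ⬝ᵥ a) :=
    hinner ▸ mul_dotProduct_le_of_convexOn_sub hf hsub x₁ xs
  have hcoco : μ * (w ⬝ᵥ w) ≤ L * -(w ⬝ᵥ a) := by
    have h := dotProduct_self_sub_le_of_dotProduct_lipschitz hL hsub hlip x₁ xs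
    rw [hinner, hgrad, neg_dotProduct_neg, dotProduct_comm, dotProduct_transpose_mulVec,
      mulVec_mulVec] at h
    exact (hμ w).trans h
  have hmono := admm_z_update_monotone hg hz hν hgs
  have hw : w = (ν₀ - νs) + t • (a + B *ᵥ (z₀ - zs)) := by
    simp only [w, a, mulVec_sub, ← hfeas]; module
  have hν₁ : ν₁ - νs = (ν₀ - νs) + t • (a + B *ᵥ (z₁ - zs)) := by
    simp only [hν, a, mulVec_sub, ← hfeas]; module
  simp only [dotProduct_self_eq_norm_sq, dotProduct_eq_inner] at hstrong hcoco hmono ⊢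
  exact admm_contraction hc hμ0 ht hcμ htμ (by rw [hw]; rfl) (by rw [hν₁]; rfl)
    hstrong hcoco hmono

end ADMM

theorem stmt15_general {n m r : ℕ}
    (A : Matrix (Fin r) (Fin n) ℝ) (B : Matrix (Fin r) (Fin m) ℝ) (b : Fin r → ℝ)
    (f : (Fin n → ℝ) → ℝ) (g : (Fin m → ℝ) → ℝ)
    (c₁ : ℝ) (hc₁ : 0 < c₁)
    (hf : ConvexOn ℝ Set.univ (fun y => f y - c₁ / 2 * ((A *ᵥ y) ⬝ᵥ (A *ᵥ y))))
    (hg : ConvexOn ℝ Set.univ g)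
    -- f is differentiable with gradient f' (equivalently, for convex f: f' is a
    -- subgradient selection), and f' is L-Lipschitz:
    (f' : (Fin n → ℝ) → (Fin n → ℝ)) (L : ℝ) (hL : 0 < L)
    (hf'sub : ∀ x y : Fin n → ℝ, f x + f' x ⬝ᵥ (y - x) ≤ f y)
    (hf'lip : ∀ x y : Fin n → ℝ,
      Real.sqrt ((f' x - f' y) ⬝ᵥ (f' x - f' y)) ≤ L * Real.sqrt ((x - y) ⬝ᵥ (x - y)))
    -- A has full row rank, and μ = λ_min(AAᵀ):
    (μ : ℝ) (hμ : IsGreatest {c : ℝ | ∀ v : Fin r → ℝ, c * (v ⬝ᵥ v) ≤ v ⬝ᵥ ((A * Aᵀ) *ᵥ v)} μ)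
    (t : ℝ) (ht0 : 0 < t) (ht : t < Real.sqrt (c₁ * L / μ))
    -- ADMM iterations with step t, from λ⁰ = lam 0 and z⁰ = z 0:
    (x : ℕ → Fin n → ℝ) (z : ℕ → Fin m → ℝ) (lam : ℕ → Fin r → ℝ)
    (hxmin : ∀ k, 1 ≤ k → ∀ x' : Fin n → ℝ,
      f (x k) + lam (k - 1) ⬝ᵥ (A *ᵥ x k)
          + t / 2 * ((A *ᵥ x k + B *ᵥ z (k - 1) - b) ⬝ᵥ (A *ᵥ x k + B *ᵥ z (k - 1) - b))
        ≤ f x' + lam (k - 1) ⬝ᵥ (A *ᵥ x')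
          + t / 2 * ((A *ᵥ x' + B *ᵥ z (k - 1) - b) ⬝ᵥ (A *ᵥ x' + B *ᵥ z (k - 1) - b)))
    (hzmin : ∀ k, 1 ≤ k → ∀ z' : Fin m → ℝ,
      g (z k) + lam (k - 1) ⬝ᵥ (B *ᵥ z k)
          + t / 2 * ((A *ᵥ x k + B *ᵥ z k - b) ⬝ᵥ (A *ᵥ x k + B *ᵥ z k - b))
        ≤ g z' + lam (k - 1) ⬝ᵥ (B *ᵥ z')
          + t / 2 * ((A *ᵥ x k + B *ᵥ z' - b) ⬝ᵥ (A *ᵥ x k + B *ᵥ z' - b)))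
    (hlamit : ∀ k, 1 ≤ k → lam k = lam (k - 1) + t • (A *ᵥ x k + B *ᵥ z k - b))
    -- (x*, z*) optimal with Lagrange multiplier λ*:
    (xstar : Fin n → ℝ) (zstar : Fin m → ℝ) (lamstar : Fin r → ℝ)
    (hfeas : A *ᵥ xstar + B *ᵥ zstar = b)
    (hfstar : f' xstar = -(Aᵀ *ᵥ lamstar))
    (hgsub : ∀ w : Fin m → ℝ, g zstar + (-(Bᵀ *ᵥ lamstar)) ⬝ᵥ (w - zstar) ≤ g w) :
    ∀ k : ℕ,
      (lam (k + 1) - lamstar) ⬝ᵥ (lam (k + 1) - lamstar)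
          + t ^ 2 * ((B *ᵥ (z (k + 1) - zstar)) ⬝ᵥ (B *ᵥ (z (k + 1) - zstar)))
        ≤ (1 - 2 * c₁ * t / (c₁ * (L / μ) + 2 * c₁ * t + t ^ 2))
          * ((lam k - lamstar) ⬝ᵥ (lam k - lamstar)
            + t ^ 2 * ((B *ᵥ (z k - zstar)) ⬝ᵥ (B *ᵥ (z k - zstar)))) := by
  have hμ0 : 0 < μ := by
    by_contra! h
    have : √(c₁ * L / μ) = 0 :=
      Real.sqrt_eq_zero'.2 (div_nonpos_of_nonneg_of_nonpos (by positivity) h)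
    linarith
  have htμ : t ^ 2 * μ < c₁ * L := (lt_div_iff₀ hμ0).1 ((Real.lt_sqrt ht0.le).1 ht)
  have hcμ : c₁ * μ ≤ L := mul_le_of_isGreatest hc₁.le hμ hμ0 fun u => by
    have hlow := le_apply_add_of_convexOn_sub hf hf'sub 0 u
    have hup := apply_add_le_of_dotProduct_lipschitz hf'sub hf'lip 0 u
    rw [zero_add] at hlow hup
    linarith
  have hN : 0 < c₁ * L + 2 * c₁ * t * μ + t ^ 2 * μ := by positivity
  have hrate : 1 - 2 * c₁ * t / (c₁ * (L / μ) + 2 * c₁ * t + t ^ 2)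
      = (c₁ * L + t ^ 2 * μ) / (c₁ * L + 2 * c₁ * t * μ + t ^ 2 * μ) := by
    field_simp
    ring
  intro k
  rw [hrate, div_mul_eq_mul_div, le_div_iff₀ hN]
  have hx := hxmin (k + 1) k.succ_pos
  have hz := hzmin (k + 1) k.succ_pos
  have hν := hlamit (k + 1) k.succ_pos
  simp only [Nat.add_sub_cancel] at hx hz hν
  exact admm_step hc₁ hμ0 hcμ ht0 htμ hμ.1 hf hg hf'sub hf'lip hx hz hν hfeas hfstar hgsub

theorem stmt15 {n m r : ℕ}
    (A : Matrix (Fin r) (Fin n) ℝ) (B : Matrix (Fin r) (Fin m) ℝ) (b : Fin r → ℝ)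
    (f : (Fin n → ℝ) → ℝ) (g : (Fin m → ℝ) → ℝ)
    (c₁ : ℝ) (hc₁ : 0 < c₁)
    (hf : ConvexOn ℝ Set.univ (fun y => f y - c₁ / 2 * ((A *ᵥ y) ⬝ᵥ (A *ᵥ y))))
    (hg : ConvexOn ℝ Set.univ g)
    -- f is differentiable with gradient f' (equivalently, for convex f: f' is a
    -- subgradient selection), and f' is L-Lipschitz:
    (f' : (Fin n → ℝ) → (Fin n → ℝ)) (L : ℝ) (hL : 0 < L)
    (hf'sub : ∀ x y : Fin n → ℝ, f x + f' x ⬝ᵥ (y - x) ≤ f y)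
    (hf'lip : ∀ x y : Fin n → ℝ,
      Real.sqrt ((f' x - f' y) ⬝ᵥ (f' x - f' y)) ≤ L * Real.sqrt ((x - y) ⬝ᵥ (x - y)))
    -- A has full row rank, and μ = λ_min(AAᵀ):
    (hArank : A.rank = r)
    (μ : ℝ) (hμ : IsGreatest {c : ℝ | ∀ v : Fin r → ℝ, c * (v ⬝ᵥ v) ≤ v ⬝ᵥ ((A * Aᵀ) *ᵥ v)} μ)
    (t : ℝ) (ht0 : 0 < t) (ht : t < Real.sqrt (c₁ * L / μ))
    -- ADMM iterations with step t, from λ⁰ = lam 0 and z⁰ = z 0: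
    (x : ℕ → Fin n → ℝ) (z : ℕ → Fin m → ℝ) (lam : ℕ → Fin r → ℝ)
    (hxmin : ∀ k, 1 ≤ k → ∀ x' : Fin n → ℝ,
      f (x k) + lam (k - 1) ⬝ᵥ (A *ᵥ x k)
          + t / 2 * ((A *ᵥ x k + B *ᵥ z (k - 1) - b) ⬝ᵥ (A *ᵥ x k + B *ᵥ z (k - 1) - b))
        ≤ f x' + lam (k - 1) ⬝ᵥ (A *ᵥ x')
          + t / 2 * ((A *ᵥ x' + B *ᵥ z (k - 1) - b) ⬝ᵥ (A *ᵥ x' + B *ᵥ z (k - 1) - b)))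
    (hzmin : ∀ k, 1 ≤ k → ∀ z' : Fin m → ℝ,
      g (z k) + lam (k - 1) ⬝ᵥ (B *ᵥ z k)
          + t / 2 * ((A *ᵥ x k + B *ᵥ z k - b) ⬝ᵥ (A *ᵥ x k + B *ᵥ z k - b))
        ≤ g z' + lam (k - 1) ⬝ᵥ (B *ᵥ z')
          + t / 2 * ((A *ᵥ x k + B *ᵥ z' - b) ⬝ᵥ (A *ᵥ x k + B *ᵥ z' - b)))
    (hlamit : ∀ k, 1 ≤ k → lam k = lam (k - 1) + t • (A *ᵥ x k + B *ᵥ z k - b))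
    -- (x*, z*) optimal with Lagrange multiplier λ*:
    (xstar : Fin n → ℝ) (zstar : Fin m → ℝ) (lamstar : Fin r → ℝ)
    (hfeas : A *ᵥ xstar + B *ᵥ zstar = b)
    (hfstar : f' xstar = -(Aᵀ *ᵥ lamstar))
    (hgsub : ∀ w : Fin m → ℝ, g zstar + (-(Bᵀ *ᵥ lamstar)) ⬝ᵥ (w - zstar) ≤ g w) :
    ∀ k : ℕ,
      (lam (k + 1) - lamstar) ⬝ᵥ (lam (k + 1) - lamstar)
          + t ^ 2 * ((B *ᵥ (z (k + 1) - zstar)) ⬝ᵥ (B *ᵥ (z (k + 1) - zstar)))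
        ≤ (1 - 2 * c₁ * t / (c₁ * (L / μ) + 2 * c₁ * t + t ^ 2))
          * ((lam k - lamstar) ⬝ᵥ (lam k - lamstar)
            + t ^ 2 * ((B *ᵥ (z k - zstar)) ⬝ᵥ (B *ᵥ (z k - zstar)))) :=
  stmt15_general A B b f g c₁ hc₁ hf hg f' L hL hf'sub hf'lip μ hμ t ht0 ht x z lam hxmin hzmin
    hlamit xstar zstar lamstar hfeas hfstar hgsub
end

section
/- Let N ≥ 4 be an integer and c₁ > 0. Define the N×N real symmetric matrix D(t,c₁) by: D₁₁ = 2c₁; D_{1,N} = D_{N,1} = t − c₁; D_{1,j} = 0 for 2 ≤ j ≤ N−1; diagonal entries D_{k,k} = α_k where α₂ = 6c₁ − 5t, α_k = 2(2k² − 3k + 1)c₁ − (4k − 1)t for 3 ≤ k ≤ N−1, and α_N = (2N² − 4N + 4)c₁ − (3N − 5 + N²/(N−1)²)t; tridiagonal entries D_{k,k+1} = D_{k+1,k} = β_k = 2kt − (2k² − k − 1)c₁ for 2 ≤ k ≤ N−1; last-column entries D_{2,N} = D_{N,2} = −t and D_{k,N} = D_{N,k} = t for 3 ≤ k ≤ N−2;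 all other entries zero. Then for every t ∈ [0, c₁], the matrix D(t,c₁) is positive semidefinite. -/
open Matrix

/-- Diagonal entries α_k (1-based index `k`) of the N×N matrix D(t,c₁). -/
noncomputable def Dalpha (N : ℕ) (t c : ℝ) (k : ℕ) : ℝ :=
  if k = 2 then 6 * c - 5 * t
  else if k ≤ N - 1 then 2 * (2 * (k : ℝ) ^ 2 - 3 * (k : ℝ) + 1) * c - (4 * (k : ℝ) - 1) * t
  else (2 * (N : ℝ) ^ 2 - 4 * (N : ℝ) + 4) * c
    - (3 * (N : ℝ) - 5 + (N : ℝ) ^ 2 / ((N : ℝ) - 1) ^ 2) * t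

/-- Off-diagonal entries β_k (1-based index `k`) of the N×N matrix D(t,c₁). -/
noncomputable def Dbeta (t c : ℝ) (k : ℕ) : ℝ :=
  2 * (k : ℝ) * t - (2 * (k : ℝ) ^ 2 - (k : ℝ) - 1) * c

/-- Upper-triangular entry of D(t,c₁) at 1-based position (a,b) with a ≤ b. -/
noncomputable def Dentry (N : ℕ) (t c : ℝ) (a b : ℕ) : ℝ :=
  if a = 1 then (if b = 1 then 2 * c else if b = N then t - c else 0)
  else if a = b then Dalpha N t c a
  else if b = a + 1 then Dbeta t c a
  else if b = N then (if a = 2 then -t else if a ≤ N - 2 then t else 0)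
  else 0

/-- The N×N symmetric matrix D(t,c₁) appearing in the primal-feasibility bound. -/
noncomputable def Dmat (N : ℕ) (t c : ℝ) : Matrix (Fin N) (Fin N) ℝ :=
  fun i j =>
    if (i : ℕ) ≤ (j : ℕ) then Dentry N t c ((i : ℕ) + 1) ((j : ℕ) + 1)
    else Dentry N t c ((j : ℕ) + 1) ((i : ℕ) + 1)

/-!
The entries are affine in `(t, c₁)`, so `D(t, c₁) = (c₁ - t) • D(0, 1) + t • D(1, 1)` and it
suffices that `D(0, 1)` and `D(1, 1)` are positive semidefinite. Telescoping along the tridiagonal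
part writes the quadratic form of `D(0, 1)` as a sum of squares. For `D(1, 1)` the same telescoping
leaves weights of order `2k²` on the squares `(y_k - y_{k+1})²`; Abel summation rewrites the
coupling `Σ y_k y_N` with the last coordinate as a sum of terms `v_k (y_k - y_{k+1}) y_N` with
`v_k` linear in `k`, plus boundary terms, each absorbed by the corresponding square at a cost of at most `y_N² / 2`, and the
diagonal entry `α_N` pays for all of them.
-/

open Finset

section SymmOfUpper

variable {R : Type*}

def symmOfUpper (n : ℕ) (U : ℕ → ℕ → R) : Matrix (Fin n) (Fin n) R :=
  fun i j => if (i : ℕ) ≤ j then U i j else U j i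

theorem symmOfUpper_isSymm (n : ℕ) (U : ℕ → ℕ → R) : (symmOfUpper n U).IsSymm := by
  ext i j
  by_cases h : i = j
  · subst h; rfl
  · have h' : (i : ℕ) ≠ j := Fin.val_ne_of_ne h
    simp only [symmOfUpper, transpose_apply]
    split_ifs <;> first | rfl | omega

variable [CommRing R]

def upperQuadForm (n : ℕ) (U : ℕ → ℕ → R) (y : ℕ → R) : R :=
  ∑ j ∈ range n, (U j j * y j ^ 2 + 2 * ∑ i ∈ range j, U i j * y i * y j)

theorem sum_range_sum_range_symm_eq_upperQuadForm (n : ℕ) (U : ℕ → ℕ → R) (y : ℕ → R) :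
    ∑ i ∈ range n, ∑ j ∈ range n, y i * (if i ≤ j then U i j else U j i) * y j
      = upperQuadForm n U y := by
  induction n with
  | zero => simp [upperQuadForm]
  | succ n ih =>
    have hrow : ∑ i ∈ range n, y i * (if i ≤ n then U i n else U n i) * y n
        = ∑ i ∈ range n, U i n * y i * y n :=
      sum_congr rfl fun i hi => by rw [if_pos (mem_range.mp hi).le]; ring
    have hcol : ∑ j ∈ range n, y n * (if n ≤ j then U n j else U j n) * y j
        = ∑ i ∈ range n, U i n * y i * y n :=
      sum_congr rfl fun j hj => by rw [if_neg (not_le.mpr (mem_range.mp hj))]; ring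
    rw [sum_range_succ, sum_congr rfl fun i _ => sum_range_succ _ n, sum_add_distrib, ih,
      sum_range_succ, hrow, hcol, if_pos le_rfl, upperQuadForm, upperQuadForm, sum_range_succ]
    ring

theorem dotProduct_symmOfUpper_mulVec (n : ℕ) (U : ℕ → ℕ → R) (y : ℕ → R) :
    (fun i : Fin n => y i) ⬝ᵥ symmOfUpper n U *ᵥ (fun i => y i)
      = upperQuadForm n U y := by
  rw [← sum_range_sum_range_symm_eq_upperQuadForm]
  simp only [dotProduct, mulVec, symmOfUpper, mul_sum]
  rw [← Fin.sum_univ_eq_sum_range]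
  refine sum_congr rfl fun i _ => ?_
  rw [← Fin.sum_univ_eq_sum_range]
  exact sum_congr rfl fun j _ => by ring

end SymmOfUpper

theorem posSemidef_symmOfUpper {n : ℕ} {U : ℕ → ℕ → ℝ}
    (hU : ∀ y : ℕ → ℝ, 0 ≤ upperQuadForm n U y) : (symmOfUpper n U).PosSemidef := by
  refine .of_dotProduct_mulVec_nonneg
    (isHermitian_iff_isSymm.mpr (symmOfUpper_isSymm n U)) fun x => ?_
  obtain ⟨y, rfl⟩ : ∃ y : ℕ → ℝ, (fun i : Fin n => y i) = x :=
    ⟨fun k => if h : k < n then x ⟨k, h⟩ else 0, by ext i; simp⟩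
  rw [star_trivial, dotProduct_symmOfUpper_mulVec]
  exact hU y

theorem nonneg_of_sq_le_mul {p q v : ℝ} (hp : 0 ≤ p) (hq : 0 ≤ q) (hv : v ^ 2 ≤ p * q)
    (a b : ℝ) : 0 ≤ p * a ^ 2 + 2 * v * a * b + q * b ^ 2 := by
  rcases hp.eq_or_lt with rfl | hp
  · have : v = 0 := by nlinarith
    subst this
    nlinarith [mul_nonneg hq (sq_nonneg b)]
  · refine nonneg_of_mul_nonneg_right ?_ hp
    nlinarith [sq_nonneg (p * a + v * b), sq_nonneg b]

noncomputable def Dupper (N : ℕ) (t c : ℝ) (i j : ℕ) : ℝ := Dentry N t c (i + 1) (j + 1)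

theorem Dmat_eq_symmOfUpper (N : ℕ) (t c : ℝ) : Dmat N t c = symmOfUpper N (Dupper N t c) :=
  rfl

theorem Dentry_eq_sub_mul_add_mul (N : ℕ) (t c : ℝ) (a b : ℕ) :
    Dentry N t c a b = (c - t) * Dentry N 0 1 a b + t * Dentry N 1 1 a b := by
  unfold Dentry Dalpha Dbeta
  split_ifs <;> ring

theorem Dmat_eq_sub_smul_add_smul (N : ℕ) (t c : ℝ) :
    Dmat N t c = (c - t) • Dmat N 0 1 + t • Dmat N 1 1 := by
  ext i j
  simp only [Dmat, Matrix.add_apply, Matrix.smul_apply, smul_eq_mul]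
  split_ifs <;> exact Dentry_eq_sub_mul_add_mul ..

section Columns

variable (m : ℕ) (t c : ℝ) (y : ℕ → ℝ)

theorem sum_Dupper_col {k : ℕ} (hk : k ≤ m) :
    ∑ i ∈ range (k + 2), Dupper (m + 4) t c i (k + 2) * y i * y (k + 2)
      = Dbeta t c (k + 2) * y (k + 1) * y (k + 2) := by
  have hzero : ∀ i ∈ range (k + 1), Dupper (m + 4) t c i (k + 2) = 0 := by
    intro i hi
    have := mem_range.mp hi
    unfold Dupper Dentry
    split_ifs <;> first | rfl | omega
  have hsub : Dupper (m + 4) t c (k + 1) (k + 2) = Dbeta t c (k + 2) := by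
    unfold Dupper Dentry
    split_ifs <;> first | rfl | omega
  rw [sum_range_succ, sum_eq_zero fun i hi => by rw [hzero i hi, zero_mul, zero_mul], hsub,
    zero_add]

theorem sum_Dupper_last_col :
    ∑ i ∈ range (m + 3), Dupper (m + 4) t c i (m + 3) * y i * y (m + 3)
      = ((t - c) * y 0 - t * y 1 + t * ∑ k ∈ range m, y (k + 2)
          + Dbeta t c (m + 3) * y (m + 2)) * y (m + 3) := by
  have hmid : ∀ k ∈ range m, Dupper (m + 4) t c (k + 2) (m + 3) = t := by
    intro k hk
    have := mem_range.mp hk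
    unfold Dupper Dentry
    split_ifs <;> first | rfl | omega
  have h0 : Dupper (m + 4) t c 0 (m + 3) = t - c := by
    unfold Dupper Dentry
    split_ifs <;> first | rfl | omega
  have h1 : Dupper (m + 4) t c 1 (m + 3) = -t := by
    unfold Dupper Dentry
    split_ifs <;> first | rfl | omega
  have hlast : Dupper (m + 4) t c (m + 2) (m + 3) = Dbeta t c (m + 3) := by
    unfold Dupper Dentry
    split_ifs <;> first | rfl | omega
  have hsum : ∑ k ∈ range m, Dupper (m + 4) t c (k + 2) (m + 3) * y (k + 2) * y (m + 3)
      = t * ∑ k ∈ range m, y (k + 2) * y (m + 3) := by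
    rw [mul_sum]
    exact sum_congr rfl fun k hk => by rw [hmid k hk, mul_assoc]
  rw [sum_range_succ, sum_range_succ', sum_range_succ', hsum, h0, h1, hlast, ← sum_mul]
  ring

end Columns

theorem upperQuadForm_Dupper (m : ℕ) (t c : ℝ) (y : ℕ → ℝ) :
    upperQuadForm (m + 4) (Dupper (m + 4) t c) y
      = 2 * c * y 0 ^ 2 + (6 * c - 5 * t) * y 1 ^ 2
        + ∑ k ∈ range (m + 1), (Dalpha (m + 4) t c (k + 3) * y (k + 2) ^ 2
            + 2 * Dbeta t c (k + 2) * y (k + 1) * y (k + 2))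
        + Dalpha (m + 4) t c (m + 4) * y (m + 3) ^ 2
        + 2 * ((t - c) * y 0 - t * y 1 + t * ∑ k ∈ range m, y (k + 2)
            + Dbeta t c (m + 3) * y (m + 2)) * y (m + 3) := by
  have hcol : ∀ k ∈ range (m + 1),
      Dupper (m + 4) t c (k + 2) (k + 2) * y (k + 2) ^ 2
        + 2 * ∑ i ∈ range (k + 2), Dupper (m + 4) t c i (k + 2) * y i * y (k + 2)
      = Dalpha (m + 4) t c (k + 3) * y (k + 2) ^ 2
        + 2 * Dbeta t c (k + 2) * y (k + 1) * y (k + 2) := by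
    intro k hk
    rw [sum_Dupper_col m t c y (Nat.lt_succ_iff.mp (mem_range.mp hk))]
    have hdiag : Dupper (m + 4) t c (k + 2) (k + 2) = Dalpha (m + 4) t c (k + 3) := by
      unfold Dupper Dentry
      split_ifs <;> first | rfl | omega
    rw [hdiag]
    ring
  have h00 : Dupper (m + 4) t c 0 0 = 2 * c := rfl
  have h11 : Dupper (m + 4) t c 1 1 = 6 * c - 5 * t := by
    simp [Dupper, Dentry, Dalpha]
  have h01 : Dupper (m + 4) t c 0 1 = 0 := by
    unfold Dupper Dentry
    split_ifs <;> first | rfl | omega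
  have hNN : Dupper (m + 4) t c (m + 3) (m + 3) = Dalpha (m + 4) t c (m + 4) := by
    unfold Dupper Dentry
    split_ifs <;> first | rfl | omega
  rw [upperQuadForm, sum_range_succ, sum_range_succ', sum_range_succ', sum_congr rfl hcol,
    sum_Dupper_last_col, hNN]
  simp only [h00, h11, h01, zero_add, range_zero, sum_empty, sum_range_one]
  ring

theorem Dalpha_of_three_le {N k : ℕ} (t c : ℝ) (h3 : 3 ≤ k) (hk : k < N) :
    Dalpha N t c k = 2 * (2 * (k : ℝ) ^ 2 - 3 * k + 1) * c - (4 * (k : ℝ) - 1) * t := by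
  rw [Dalpha, if_neg (by omega), if_pos (by omega)]

theorem sum_Dalpha_Dbeta_zero_one {m K : ℕ} (hK : K ≤ m + 1) (y : ℕ → ℝ) :
    ∑ k ∈ range K, (Dalpha (m + 4) 0 1 (k + 3) * y (k + 2) ^ 2
        + 2 * Dbeta 0 1 (k + 2) * y (k + 1) * y (k + 2))
      = ∑ k ∈ range K, ((2 * k + 5) * (k + 1) * (y (k + 1) - y (k + 2)) ^ 2 + y (k + 2) ^ 2)
        - 5 * y 1 ^ 2 + (2 * K + 5) * (K + 1) * y (K + 1) ^ 2 := by
  induction K with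
  | zero => simp
  | succ K ih =>
    rw [sum_range_succ, sum_range_succ, ih (by omega), Dalpha_of_three_le 0 1 (by omega)
      (by omega), Dbeta]
    push_cast
    ring

theorem upperQuadForm_Dupper_zero_one_nonneg (m : ℕ) (y : ℕ → ℝ) :
    0 ≤ upperQuadForm (m + 4) (Dupper (m + 4) 0 1) y := by
  have hsos : upperQuadForm (m + 4) (Dupper (m + 4) 0 1) y
      = y 0 ^ 2 + (y 0 - y (m + 3)) ^ 2 + y 1 ^ 2
        + ∑ k ∈ range (m + 1),
            ((2 * k + 5) * (k + 1) * (y (k + 1) - y (k + 2)) ^ 2 + y (k + 2) ^ 2)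
        + (2 * m + 7) * (m + 2) * (y (m + 2) - y (m + 3)) ^ 2 + (m + 5) * y (m + 3) ^ 2 := by
    rw [upperQuadForm_Dupper, sum_Dalpha_Dbeta_zero_one le_rfl, Dalpha, Dbeta,
      if_neg (by omega), if_neg (by omega)]
    push_cast
    ring
  rw [hsos]
  positivity

theorem Dmat_zero_one_posSemidef {N : ℕ} (hN : 4 ≤ N) : (Dmat N 0 1).PosSemidef := by
  obtain ⟨m, rfl⟩ : ∃ m, N = m + 4 := ⟨N - 4, by omega⟩
  rw [Dmat_eq_symmOfUpper]
  exact posSemidef_symmOfUpper (upperQuadForm_Dupper_zero_one_nonneg m)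

theorem sum_Dalpha_Dbeta_one_one {m K : ℕ} (hK : K ≤ m) (y : ℕ → ℝ) (b : ℝ) :
    ∑ k ∈ range (K + 1), (Dalpha (m + 4) 1 1 (k + 3) * y (k + 2) ^ 2
        + 2 * Dbeta 1 1 (k + 2) * y (k + 1) * y (k + 2))
      + 2 * (∑ k ∈ range K, y (k + 2)) * b
      = ∑ k ∈ range K, ((2 * k ^ 2 + 9 * k + 8) * (y (k + 2) - y (k + 3)) ^ 2
          + 2 * k * (y (k + 2) - y (k + 3)) * b)
        + y 2 ^ 2 - 2 * y 1 * y 2 + (2 * K ^ 2 + 9 * K + 8) * y (K + 2) ^ 2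
        + 2 * y 2 * b + 2 * (K - 1) * y (K + 2) * b := by
  induction K with
  | zero =>
    rw [sum_range_one, Dalpha_of_three_le 1 1 le_rfl (by omega), Dbeta]
    simp only [range_zero, sum_empty]
    push_cast
    ring
  | succ K ih =>
    rw [sum_range_succ _ (K + 1), sum_range_succ (fun k => y (k + 2)) K,
      Dalpha_of_three_le 1 1 (by omega) (by omega), Dbeta]
    conv_rhs => rw [sum_range_succ]
    push_cast
    linear_combination ih (by omega)

theorem upperQuadForm_Dupper_one_one_nonneg (m : ℕ) (y : ℕ → ℝ) :
    0 ≤ upperQuadForm (m + 4) (Dupper (m + 4) 1 1) y := by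
  set b := y (m + 3)
  set S := ∑ k ∈ range m, ((2 * k ^ 2 + 9 * k + 8) * (y (k + 2) - y (k + 3)) ^ 2
    + 2 * k * (y (k + 2) - y (k + 3)) * b)
  set R := Dalpha (m + 4) 1 1 (m + 4) - 1 - (2 * m ^ 2 + 9 * m + 8) + 2 * (m - 1)
  have hsos : upperQuadForm (m + 4) (Dupper (m + 4) 1 1) y
      = 2 * y 0 ^ 2 + (y 1 - y 2 - b) ^ 2 + S
        + ((2 * m ^ 2 + 9 * m + 8) * (y (m + 2) - b) ^ 2 + 2 * (m - 1) * (y (m + 2) - b) * b)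
        + R * b ^ 2 := by
    rw [upperQuadForm_Dupper, Dbeta]
    push_cast
    linear_combination sum_Dalpha_Dbeta_one_one le_rfl y b
  have hS : 0 ≤ S + m / 2 * b ^ 2 := by
    have : S + m / 2 * b ^ 2 = ∑ k ∈ range m,
        ((2 * k ^ 2 + 9 * k + 8) * (y (k + 2) - y (k + 3)) ^ 2
          + 2 * k * (y (k + 2) - y (k + 3)) * b + 1 / 2 * b ^ 2) := by
      rw [sum_add_distrib, sum_const, card_range, nsmul_eq_mul]
      ring
    rw [this]
    exact sum_nonneg fun k _ => nonneg_of_sq_le_mul (by positivity) (by norm_num)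
      (by nlinarith [(k.cast_nonneg : (0 : ℝ) ≤ k)]) _ _
  -- At `N = 4` the slack `R - m / 2` is below `1 / 2`, hence the smaller weight `(2m + 1) / 8`.
  have hlast : 0 ≤ (2 * m ^ 2 + 9 * m + 8) * (y (m + 2) - b) ^ 2
      + 2 * (m - 1) * (y (m + 2) - b) * b + (2 * m + 1) / 8 * b ^ 2 :=
    nonneg_of_sq_le_mul (by positivity) (by positivity)
      (by nlinarith [(m.cast_nonneg : (0 : ℝ) ≤ m)]) _ _
  have hR : m / 2 + (2 * m + 1) / 8 ≤ R := by
    have hm : (0 : ℝ) ≤ m := m.cast_nonneg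
    have hfrac : ((m : ℝ) + 4) ^ 2 / ((m : ℝ) + 4 - 1) ^ 2 ≤ (10 * m + 15) / 8 := by
      rw [div_le_iff₀ (by nlinarith)]
      nlinarith [mul_nonneg hm (mul_nonneg hm hm)]
    simp only [R, Dalpha, if_neg (show m + 4 ≠ 2 by omega),
      if_neg (show ¬ m + 4 ≤ m + 4 - 1 by omega)]
    push_cast
    linarith
  rw [hsos]
  linarith [mul_nonneg (sub_nonneg.mpr hR) (sq_nonneg b), sq_nonneg (y 0),
    sq_nonneg (y 1 - y 2 - b)]

theorem Dmat_one_one_posSemidef {N : ℕ} (hN : 4 ≤ N) : (Dmat N 1 1).PosSemidef := by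
  obtain ⟨m, rfl⟩ : ∃ m, N = m + 4 := ⟨N - 4, by omega⟩
  rw [Dmat_eq_symmOfUpper]
  exact posSemidef_symmOfUpper (upperQuadForm_Dupper_one_one_nonneg m)

theorem stmt19_general (N : ℕ) (hN : 4 ≤ N) (c₁ t : ℝ)
    (ht : t ∈ Set.Icc (0 : ℝ) c₁) :
    (Dmat N t c₁).PosSemidef := by
  rw [Dmat_eq_sub_smul_add_smul]
  exact ((Dmat_zero_one_posSemidef hN).smul (sub_nonneg.mpr ht.2)).add
    ((Dmat_one_one_posSemidef hN).smul ht.1)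

theorem stmt19 (N : ℕ) (hN : 4 ≤ N) (c₁ t : ℝ) (hc₁ : 0 < c₁)
    (ht : t ∈ Set.Icc (0 : ℝ) c₁) :
    (Dmat N t c₁).PosSemidef :=
  stmt19_general N hN c₁ t ht
end
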